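/- arXiv:1408.3602 — 4 statements merged into one kernel-verified Lean document; each statement's English description precedes it below -/
import Mathlib

section
/- With Π an orthogonal projection, a positive definite, v in the image of Π, and Π⁻¹v the a-norm minimizer of {u : Πu = v}, the Pythagoras-type identity ‖v‖_a² = ‖Π⁻¹v‖_a² + ‖v − Π⁻¹v‖_a² holds. -/
open Matrix

/-!
Write `u⋆ = Π⁻¹v` and `w = v - u⋆`. Since `v` lies in the image of the idempotent `Π`, `Πv = v`,
so `Πw = 0` and the whole line `u⋆ + t w` satisfies the constraint. Minimality of `u⋆` makes the
quadratic `t ↦ ‖u⋆ + t w‖_a² - ‖u⋆‖_a² = 2t⟨u⋆, w⟩_a + t²‖w‖_a²` nonnegative, so its discriminant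
`4⟨u⋆, w⟩_a²` is nonpositive: `u⋆ ⊥_a w`, and `v = u⋆ + w` is Pythagoras.
-/

/-- The `a`-weighted inner product `⟨u,v⟩_a = uᵀ a⁻¹ v`. -/
noncomputable def ainner {n : ℕ} (a : Matrix (Fin n) (Fin n) ℝ) (u v : Fin n → ℝ) : ℝ :=
  u ⬝ᵥ (a⁻¹ *ᵥ v)

/-- The `a`-weighted norm `‖u‖_a = √(uᵀ a⁻¹ u)`. -/
noncomputable def anorm {n : ℕ} (a : Matrix (Fin n) (Fin n) ℝ) (u : Fin n → ℝ) : ℝ :=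
  Real.sqrt (ainner a u u)

/-- `ustar` minimizes the `a`-norm over the affine set `{u : Π u = v}`. -/
def IsAMinimizer {n : ℕ} (P a : Matrix (Fin n) (Fin n) ℝ) (v ustar : Fin n → ℝ) : Prop :=
  P *ᵥ ustar = v ∧ ∀ u : Fin n → ℝ, P *ᵥ u = v → anorm a ustar ≤ anorm a u

section ainner

variable {n : ℕ} {a : Matrix (Fin n) (Fin n) ℝ}

lemma ainner_self_nonneg (ha : a.PosDef) (u : Fin n → ℝ) : 0 ≤ ainner a u u :=
  ha.inv.posSemidef.dotProduct_mulVec_nonneg u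

lemma ainner_comm (ha : a.PosDef) (u v : Fin n → ℝ) : ainner a u v = ainner a v u := by
  have hsymm : (a⁻¹)ᵀ = a⁻¹ := by
    simpa [conjTranspose_eq_transpose_of_trivial] using ha.inv.isHermitian.eq
  rw [ainner, ainner, dotProduct_mulVec, ← mulVec_transpose, hsymm, dotProduct_comm]

lemma ainner_add_smul_self (ha : a.PosDef) (u w : Fin n → ℝ) (t : ℝ) :
    ainner a (u + t • w) (u + t • w) =
      ainner a u u + 2 * t * ainner a u w + t ^ 2 * ainner a w w := by
  have hwu := ainner_comm ha w u
  simp only [ainner, mulVec_add, mulVec_smul, add_dotProduct, dotProduct_add, smul_dotProduct,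
    dotProduct_smul, smul_eq_mul] at hwu ⊢
  rw [hwu]
  ring

lemma ainner_add_self_of_ainner_eq_zero (ha : a.PosDef) {u w : Fin n → ℝ}
    (huw : ainner a u w = 0) : ainner a (u + w) (u + w) = ainner a u u + ainner a w w := by
  simpa [huw] using ainner_add_smul_self ha u w 1

lemma anorm_le_anorm_iff (ha : a.PosDef) {u w : Fin n → ℝ} :
    anorm a u ≤ anorm a w ↔ ainner a u u ≤ ainner a w w :=
  Real.sqrt_le_sqrt_iff (ainner_self_nonneg ha w)

lemma ainner_eq_zero_of_forall_le_ainner_add_smul (ha : a.PosDef) {u w : Fin n → ℝ}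
    (hle : ∀ t : ℝ, ainner a u u ≤ ainner a (u + t • w) (u + t • w)) : ainner a u w = 0 := by
  have hquad : ∀ t : ℝ, 0 ≤ ainner a w w * (t * t) + 2 * ainner a u w * t + 0 := fun t => by
    linarith [hle t, ainner_add_smul_self ha u w t]
  have hdisc := discrim_le_zero hquad
  rw [discrim] at hdisc
  nlinarith [sq_nonneg (ainner a u w)]

end ainner

lemma IsAMinimizer.ainner_eq_zero {n : ℕ} {P a : Matrix (Fin n) (Fin n) ℝ} {v ustar : Fin n → ℝ}
    (ha : a.PosDef) (hmin : IsAMinimizer P a v ustar) {w : Fin n → ℝ} (hw : P *ᵥ w = 0) :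
    ainner a ustar w = 0 := by
  refine ainner_eq_zero_of_forall_le_ainner_add_smul ha fun t => ?_
  rw [← anorm_le_anorm_iff ha]
  exact hmin.2 _ (by rw [mulVec_add, mulVec_smul, hw, hmin.1, smul_zero, add_zero])

theorem stmt3_general {n : ℕ} (P a : Matrix (Fin n) (Fin n) ℝ)
    (hPidem : P * P = P)
    (ha : a.PosDef)
    (v : Fin n → ℝ) (hv : ∃ x, P *ᵥ x = v)
    (Pinv_v : Fin n → ℝ) (hmin : IsAMinimizer P a v Pinv_v) :
    ainner a v v = ainner a Pinv_v Pinv_v + ainner a (v - Pinv_v) (v - Pinv_v) := by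
  obtain ⟨x, rfl⟩ := hv
  have hPv : P *ᵥ (P *ᵥ x) = P *ᵥ x := by rw [mulVec_mulVec, hPidem]
  have hker : P *ᵥ (P *ᵥ x - Pinv_v) = 0 := by rw [mulVec_sub, hPv, hmin.1, sub_self]
  have horth := hmin.ainner_eq_zero ha hker
  rw [← ainner_add_self_of_ainner_eq_zero ha horth, add_sub_cancel]

theorem stmt3 {n : ℕ} (P a : Matrix (Fin n) (Fin n) ℝ)
    (hPsymm : P.IsSymm) (hPidem : P * P = P)
    (ha : a.PosDef) (haSymm : a.IsSymm)
    (v : Fin n → ℝ) (hv : ∃ x, P *ᵥ x = v)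
    (Pinv_v : Fin n → ℝ) (hmin : IsAMinimizer P a v Pinv_v) :
    ainner a v v = ainner a Pinv_v Pinv_v + ainner a (v - Pinv_v) (v - Pinv_v) :=
  stmt3_general P a hPidem ha v hv Pinv_v hmin
end

section
/- Let Π be an orthogonal projection on ℝⁿ, σ an n×m matrix with a = σσᵀ positive definite, and v in the image of Π. Then sup over p ∈ ℝⁿ of (⟨v, p⟩ − ½‖σᵀ Π p‖²) equals the minimum of ½ uᵀ a⁻¹ u over {u ∈ ℝⁿ : Πu = v} (strong duality for this quadratic problem). -/
open Matrix

private lemma sigma_dot {n m : ℕ} (σ : Matrix (Fin n) (Fin m) ℝ) (w : Fin n → ℝ) :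
    (σ.transpose *ᵥ w) ⬝ᵥ (σ.transpose *ᵥ w) = w ⬝ᵥ ((σ * σ.transpose) *ᵥ w) := by
  rw [Matrix.dotProduct_mulVec, Matrix.vecMul_transpose, Matrix.mulVec_mulVec, dotProduct_comm]

private lemma dotP {n : ℕ} {P : Matrix (Fin n) (Fin n) ℝ} (hPsymm : P.IsSymm)
    (x w : Fin n → ℝ) : x ⬝ᵥ (P *ᵥ w) = (P *ᵥ x) ⬝ᵥ w := by
  rw [Matrix.dotProduct_mulVec, ← Matrix.mulVec_transpose, hPsymm.eq]

private lemma exists_l {n m : ℕ} (P : Matrix (Fin n) (Fin n) ℝ)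
    (hPsymm : P.IsSymm) (hPidem : P * P = P)
    (σ : Matrix (Fin n) (Fin m) ℝ) (ha : (σ * σ.transpose).PosDef)
    (v : Fin n → ℝ) (hv : ∃ x, P *ᵥ x = v) :
    ∃ l, P *ᵥ l = l ∧ (P * (σ * σ.transpose) * P) *ᵥ l = v := by
  set a := σ * σ.transpose with hadef
  set B := P * a * P with hB
  have hBmul : ∀ y : Fin n → ℝ, B *ᵥ y = P *ᵥ (a *ᵥ (P *ᵥ y)) := by
    intro y; rw [hB, ← Matrix.mulVec_mulVec, ← Matrix.mulVec_mulVec]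
  have hfix : ∀ x : Fin n → ℝ, x ∈ LinearMap.range P.mulVecLin → P *ᵥ x = x := by
    rintro x ⟨y, rfl⟩
    simp only [Matrix.mulVecLin_apply, Matrix.mulVec_mulVec, hPidem]
  have hinv : ∀ x ∈ LinearMap.range P.mulVecLin,
      B.mulVecLin x ∈ LinearMap.range P.mulVecLin := by
    intro x _
    exact ⟨a *ᵥ (P *ᵥ x), by simp only [Matrix.mulVecLin_apply, hBmul]⟩
  set f := B.mulVecLin.restrict hinv with hf
  have hfinj : Function.Injective f := by
    rw [← LinearMap.ker_eq_bot, LinearMap.ker_eq_bot']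
    rintro ⟨x, hx⟩ hfx
    have hBx : B *ᵥ x = 0 := congrArg Subtype.val hfx
    have hPx : P *ᵥ x = x := hfix x hx
    have hq : x ⬝ᵥ (a *ᵥ x) = 0 := by
      have h0 : x ⬝ᵥ (B *ᵥ x) = 0 := by rw [hBx]; simp
      rwa [hBmul, hPx, dotP hPsymm, hPx] at h0
    by_contra hx0
    have hx0' : x ≠ 0 := fun h => hx0 (by simp [h])
    have hpos := ha.re_dotProduct_pos (x := x) (by exact_mod_cast fun h => hx0' h)
    simp only [RCLike.re_to_real, star_trivial] at hpos
    exact absurd hq (ne_of_gt hpos)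
  have hfsurj : Function.Surjective f :=
    (LinearMap.injective_iff_surjective (f := f)).mp hfinj
  have hvV : v ∈ LinearMap.range P.mulVecLin := by
    obtain ⟨x, hx⟩ := hv; exact ⟨x, hx⟩
  obtain ⟨⟨l, hlV⟩, hl⟩ := hfsurj ⟨v, hvV⟩
  exact ⟨l, hfix l hlV, congrArg Subtype.val hl⟩

theorem stmt9 {n m : ℕ} (P : Matrix (Fin n) (Fin n) ℝ)
    (hPsymm : P.IsSymm) (hPidem : P * P = P)
    (σ : Matrix (Fin n) (Fin m) ℝ) (ha : (σ * σ.transpose).PosDef)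
    (v : Fin n → ℝ) (hv : ∃ x, P *ᵥ x = v) :
    let a := σ * σ.transpose
    ∃ c : ℝ,
      IsLUB {z : ℝ | ∃ p : Fin n → ℝ,
          z = v ⬝ᵥ p - (1/2) * ((σ.transpose *ᵥ (P *ᵥ p)) ⬝ᵥ (σ.transpose *ᵥ (P *ᵥ p)))} c ∧
      IsLeast {z : ℝ | ∃ u : Fin n → ℝ, P *ᵥ u = v ∧ z = (1/2) * (u ⬝ᵥ (a⁻¹ *ᵥ u))} c := by
  intro a
  have hadef : a = σ * σ.transpose := rfl
  obtain ⟨l, hPl, hBl'⟩ := exists_l P hPsymm hPidem σ ha v hv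
  set B := P * a * P with hBdef
  have hBl : B *ᵥ l = v := by rw [hBdef, hadef]; exact hBl'
  have haSymm : a.IsSymm := by
    rw [hadef]; simp [Matrix.IsSymm, Matrix.transpose_mul]
  have hBmul : ∀ y : Fin n → ℝ, B *ᵥ y = P *ᵥ (a *ᵥ (P *ᵥ y)) := by
    intro y; rw [hBdef, ← Matrix.mulVec_mulVec, ← Matrix.mulVec_mulVec]
  -- the quadratic form of B
  have hquad : ∀ p : Fin n → ℝ,
      (σ.transpose *ᵥ (P *ᵥ p)) ⬝ᵥ (σ.transpose *ᵥ (P *ᵥ p)) = p ⬝ᵥ (B *ᵥ p) := by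
    intro p
    rw [sigma_dot σ (P *ᵥ p), hBmul, dotP hPsymm, ← hadef]
  have hBsymmdot : ∀ x y : Fin n → ℝ, x ⬝ᵥ (B *ᵥ y) = y ⬝ᵥ (B *ᵥ x) := by
    intro x y
    rw [hBmul, hBmul, dotP hPsymm, Matrix.dotProduct_mulVec, ← Matrix.mulVec_transpose,
      haSymm.eq, dotP hPsymm y (a *ᵥ (P *ᵥ x)), dotProduct_comm]
  have hBpsd : ∀ p : Fin n → ℝ, 0 ≤ p ⬝ᵥ (B *ᵥ p) := by
    intro p
    rw [← hquad p]
    exact Finset.sum_nonneg fun i _ => mul_self_nonneg _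
  -- invertibility facts
  have hdet : IsUnit a.det := isUnit_iff_ne_zero.mpr (ne_of_gt ha.det_pos)
  have hainv : ∀ w : Fin n → ℝ, a⁻¹ *ᵥ (a *ᵥ w) = w := by
    intro w
    rw [Matrix.mulVec_mulVec, Matrix.nonsing_inv_mul _ hdet, Matrix.one_mulVec]
  have hainvSymm : (a⁻¹).IsSymm := by
    rw [Matrix.IsSymm, Matrix.transpose_nonsing_inv, haSymm.eq]
  have hainvPsd : ∀ x : Fin n → ℝ, 0 ≤ x ⬝ᵥ (a⁻¹ *ᵥ x) := by
    intro x
    have h := (ha.inv).posSemidef.re_dotProduct_nonneg (x := x)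
    simpa [hadef] using h
  set c := (1/2) * (l ⬝ᵥ v) with hc
  -- basic identities
  have hlv : l ⬝ᵥ v = l ⬝ᵥ (a *ᵥ l) := by
    conv_lhs => rw [← hBl]
    rw [hBmul, hPl, dotP hPsymm, hPl]
  refine ⟨c, ⟨?_, ?_⟩, ?_, ?_⟩
  · -- c is an upper bound of the sup set
    rintro z ⟨p, rfl⟩
    rw [hquad p]
    have key : c - (v ⬝ᵥ p - 1/2 * (p ⬝ᵥ (B *ᵥ p)))
        = (1/2) * ((l - p) ⬝ᵥ (B *ᵥ (l - p))) := by
      have h1 : (l - p) ⬝ᵥ (B *ᵥ (l - p))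
          = l ⬝ᵥ (B *ᵥ l) - l ⬝ᵥ (B *ᵥ p) - p ⬝ᵥ (B *ᵥ l) + p ⬝ᵥ (B *ᵥ p) := by
        rw [Matrix.mulVec_sub, sub_dotProduct, dotProduct_sub,
          dotProduct_sub]
        ring
      have h2 : l ⬝ᵥ (B *ᵥ p) = p ⬝ᵥ (B *ᵥ l) := hBsymmdot l p
      have h3 : p ⬝ᵥ (B *ᵥ l) = v ⬝ᵥ p := by rw [hBl, dotProduct_comm]
      have h4 : l ⬝ᵥ (B *ᵥ l) = l ⬝ᵥ v := by rw [hBl]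
      rw [h1, h2, h3, h4, hc]; ring
    nlinarith [mul_nonneg (by norm_num : (0:ℝ) ≤ 1/2) (hBpsd (l - p))]
  · -- c is the least upper bound (c is attained)
    intro b hb
    have hmem : v ⬝ᵥ l - 1/2 * ((σ.transpose *ᵥ (P *ᵥ l)) ⬝ᵥ (σ.transpose *ᵥ (P *ᵥ l))) ∈
        {z : ℝ | ∃ p : Fin n → ℝ,
          z = v ⬝ᵥ p - (1/2) * ((σ.transpose *ᵥ (P *ᵥ p)) ⬝ᵥ (σ.transpose *ᵥ (P *ᵥ p)))} :=
      ⟨l, by norm_num⟩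
    have hcl := hb hmem
    have hval : v ⬝ᵥ l - 1/2 * ((σ.transpose *ᵥ (P *ᵥ l)) ⬝ᵥ (σ.transpose *ᵥ (P *ᵥ l))) = c := by
      rw [hquad l]
      have h4 : l ⬝ᵥ (B *ᵥ l) = l ⬝ᵥ v := by rw [hBl]
      rw [h4, dotProduct_comm v l, hc]; ring
    linarith [hcl, hval.symm.le]
  · -- c is attained in the min set with u = a *ᵥ l
    refine ⟨a *ᵥ l, ?_, ?_⟩
    · conv_lhs => rw [← hPl]
      rw [← hBmul, hBl]
    · rw [hainv, dotProduct_comm, ← hlv, hc]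
  · -- c is a lower bound of the min set
    rintro z ⟨u, hPu, rfl⟩
    have hul : u ⬝ᵥ l = l ⬝ᵥ v := by
      conv_lhs => rw [← hPl]
      rw [dotP hPsymm, hPu, dotProduct_comm]
    have key : (1/2) * (u ⬝ᵥ (a⁻¹ *ᵥ u)) - c
        = (1/2) * ((u - a *ᵥ l) ⬝ᵥ (a⁻¹ *ᵥ (u - a *ᵥ l))) := by
      have h1 : (u - a *ᵥ l) ⬝ᵥ (a⁻¹ *ᵥ (u - a *ᵥ l))
          = u ⬝ᵥ (a⁻¹ *ᵥ u) - u ⬝ᵥ (a⁻¹ *ᵥ (a *ᵥ l)) - (a *ᵥ l) ⬝ᵥ (a⁻¹ *ᵥ u)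
            + (a *ᵥ l) ⬝ᵥ (a⁻¹ *ᵥ (a *ᵥ l)) := by
        rw [Matrix.mulVec_sub, sub_dotProduct, dotProduct_sub,
          dotProduct_sub]
        ring
      have h2 : u ⬝ᵥ (a⁻¹ *ᵥ (a *ᵥ l)) = u ⬝ᵥ l := by rw [hainv]
      have h3 : (a *ᵥ l) ⬝ᵥ (a⁻¹ *ᵥ u) = u ⬝ᵥ l := by
        rw [Matrix.dotProduct_mulVec, ← Matrix.mulVec_transpose, hainvSymm.eq, hainv,
          dotProduct_comm]
      have h4 : (a *ᵥ l) ⬝ᵥ (a⁻¹ *ᵥ (a *ᵥ l)) = l ⬝ᵥ v := by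
        rw [hainv, dotProduct_comm, ← hlv]
      rw [h1, h2, h3, h4, hul, hc]; ring
    nlinarith [mul_nonneg (by norm_num : (0:ℝ) ≤ 1/2) (hainvPsd (u - a *ᵥ l))]
end

section
/- With the two-rod fixed-point equations as above, suppose ⟨x₁,x₂⟩ ≠ 0, ‖x₁‖ = ‖x₂‖ = 1, and x₁ + x₂ or x₁ − x₂ is a nonzero eigenvector of K with eigenvalue μᵢ while the other combination corresponds to μⱼ ≠ μᵢ. Then |μᵢ − μⱼ| = 4A|⟨x₁,x₂⟩| ≤ 4A. Consequently, if A < ¼ min_{i≠j}|μᵢ − μⱼ|, no such fixed points exist. -/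
open Matrix

theorem stmt16 (μ₁ μ₂ μ₃ : ℝ) (h12 : μ₁ ≠ μ₂) (h23 : μ₂ ≠ μ₃) (h13 : μ₁ ≠ μ₃)
    (K : Matrix (Fin 3) (Fin 3) ℝ) (hK : K = Matrix.diagonal ![μ₁, μ₂, μ₃])
    (A : ℝ) (hA : 0 < A)
    (x₁ x₂ : Fin 3 → ℝ) (hx₁ : x₁ ⬝ᵥ x₁ = 1) (hx₂ : x₂ ⬝ᵥ x₂ = 1)
    (hnonorth : x₁ ⬝ᵥ x₂ ≠ 0)
    (lam : ℝ)
    (heq₁ : -(K *ᵥ x₁) + (2 * A * (x₁ ⬝ᵥ x₂)) • x₂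
        - (2 * A * (x₁ ⬝ᵥ x₂) ^ 2) • x₁ + lam • x₁ = 0)
    (heq₂ : -(K *ᵥ x₂) + (2 * A * (x₁ ⬝ᵥ x₂)) • x₁
        - (2 * A * (x₁ ⬝ᵥ x₂) ^ 2) • x₂ + lam • x₂ = 0)
    (μi μj : ℝ) (hμi : μi ∈ ({μ₁, μ₂, μ₃} : Set ℝ)) (hμj : μj ∈ ({μ₁, μ₂, μ₃} : Set ℝ))
    (hij : μi ≠ μj)
    (hplus : x₁ + x₂ ≠ 0 ∧ K *ᵥ (x₁ + x₂) = μi • (x₁ + x₂))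
    (hminus : x₁ - x₂ ≠ 0 ∧ K *ᵥ (x₁ - x₂) = μj • (x₁ - x₂)) :
    (|μi - μj| = 4 * A * |x₁ ⬝ᵥ x₂| ∧ |μi - μj| ≤ 4 * A) ∧
      (A < (1/4) * min (min |μ₁ - μ₂| |μ₂ - μ₃|) |μ₁ - μ₃| → False) := by
  set c : ℝ := x₁ ⬝ᵥ x₂ with hc
  have e1 : ∀ i, (K *ᵥ x₁) i = (lam - 2*A*c^2) * x₁ i + (2*A*c) * x₂ i := by
    intro i
    have h := congrFun heq₁ i
    simp only [Pi.add_apply, Pi.sub_apply, Pi.neg_apply, Pi.smul_apply, smul_eq_mul,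
      Pi.zero_apply] at h
    linarith
  have e2 : ∀ i, (K *ᵥ x₂) i = (lam - 2*A*c^2) * x₂ i + (2*A*c) * x₁ i := by
    intro i
    have h := congrFun heq₂ i
    simp only [Pi.add_apply, Pi.sub_apply, Pi.neg_apply, Pi.smul_apply, smul_eq_mul,
      Pi.zero_apply] at h
    linarith
  have hμieq : μi = lam + 2*A*c - 2*A*c^2 := by
    obtain ⟨i, hi⟩ := Function.ne_iff.mp hplus.1
    have h := congrFun hplus.2 i
    rw [Matrix.mulVec_add] at h
    simp only [Pi.add_apply, Pi.smul_apply, smul_eq_mul] at h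
    have hne : x₁ i + x₂ i ≠ 0 := by simpa using hi
    have key : (μi - (lam + 2*A*c - 2*A*c^2)) * (x₁ i + x₂ i) = 0 := by
      linear_combination e1 i + e2 i - h
    rcases mul_eq_zero.mp key with h' | h'
    · linarith
    · exact absurd h' hne
  have hμjeq : μj = lam - 2*A*c - 2*A*c^2 := by
    obtain ⟨i, hi⟩ := Function.ne_iff.mp hminus.1
    have h := congrFun hminus.2 i
    rw [Matrix.mulVec_sub] at h
    simp only [Pi.sub_apply, Pi.smul_apply, smul_eq_mul] at h
    have hne : x₁ i - x₂ i ≠ 0 := by simpa using hi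
    have key : (μj - (lam - 2*A*c - 2*A*c^2)) * (x₁ i - x₂ i) = 0 := by
      linear_combination e1 i - e2 i - h
    rcases mul_eq_zero.mp key with h' | h'
    · linarith
    · exact absurd h' hne
  have hdiff : μi - μj = 4*A*c := by rw [hμieq, hμjeq]; ring
  have hcs : c ^ 2 ≤ 1 := by
    have h := Finset.sum_mul_sq_le_sq_mul_sq Finset.univ x₁ x₂
    have hx1 : (∑ i, x₁ i ^ 2) = 1 := by
      simpa [dotProduct, sq] using hx₁
    have hx2 : (∑ i, x₂ i ^ 2) = 1 := by
      simpa [dotProduct, sq] using hx₂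
    calc c ^ 2 = (∑ i, x₁ i * x₂ i) ^ 2 := by rw [hc]; rfl
      _ ≤ (∑ i, x₁ i ^ 2) * ∑ i, x₂ i ^ 2 := h
      _ = 1 := by rw [hx1, hx2]; ring
  have habsc : |c| ≤ 1 := by nlinarith [abs_nonneg c, sq_abs c]
  have habs : |μi - μj| = 4 * A * |c| := by
    rw [hdiff, abs_mul, abs_of_pos (by linarith : (0:ℝ) < 4*A)]
  have hle : |μi - μj| ≤ 4 * A := by
    rw [habs]; nlinarith
  refine ⟨⟨habs, hle⟩, ?_⟩
  intro hsmall
  have m12 : min (min |μ₁ - μ₂| |μ₂ - μ₃|) |μ₁ - μ₃| ≤ |μ₁ - μ₂| :=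
    le_trans (min_le_left _ _) (min_le_left _ _)
  have m23 : min (min |μ₁ - μ₂| |μ₂ - μ₃|) |μ₁ - μ₃| ≤ |μ₂ - μ₃| :=
    le_trans (min_le_left _ _) (min_le_right _ _)
  have m13 : min (min |μ₁ - μ₂| |μ₂ - μ₃|) |μ₁ - μ₃| ≤ |μ₁ - μ₃| := min_le_right _ _
  have key : |μi - μj| = |μ₁ - μ₂| ∨ |μi - μj| = |μ₂ - μ₃| ∨ |μi - μj| = |μ₁ - μ₃| := by
    simp only [Set.mem_insert_iff, Set.mem_singleton_iff] at hμi hμj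
    rcases hμi with rfl | rfl | rfl <;> rcases hμj with rfl | rfl | rfl <;>
      first
        | exact absurd rfl hij
        | exact Or.inl rfl
        | exact Or.inl (abs_sub_comm _ _)
        | exact Or.inr (Or.inl rfl)
        | exact Or.inr (Or.inl (abs_sub_comm _ _))
        | exact Or.inr (Or.inr rfl)
        | exact Or.inr (Or.inr (abs_sub_comm _ _))
  have hmin : min (min |μ₁ - μ₂| |μ₂ - μ₃|) |μ₁ - μ₃| ≤ |μi - μj| := by
    rcases key with h' | h' | h' <;> rw [h']
    · exact m12
    · exact m23
    · exact m13
  linarith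
end

section
/- Let K = diag(μ₁,μ₂,μ₃) with 0 < μ₁ < μ₂ < μ₃, A > 0 satisfying A < ¼min_{i≠j}|μᵢ−μⱼ|. Then the set of zeros of the two-rod field F on S²×S² is exactly {(±eᵢ, ±eⱼ) : i,j ∈ {1,2,3}}, a set of 36 points. -/
/-!
For a unit vector `x`, `(1 - x xᵀ) v = 0` says that `v` is a multiple of `x`, so a zero of the
field is a pair of unit vectors with `(μ_k + r₁) x₁ k = d x₂ k` and `(μ_k + r₂) x₂ k = d x₁ k`,
where `d = 2A⟨x₁, x₂⟩`. Pairing the first relation with `x₂` and the second with `x₁` gives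
`(r₁ - r₂)⟨x₁, x₂⟩ = 0`, so `d = 0` or `r₁ = r₂`; either way `(μ_k + r)² = d²` on the support of
each `xᵢ`. Two coordinates in one support would then force `|μ_k - μ_l| ≤ 2|d| ≤ 4A`, against the
assumed gap, so each `xᵢ` is `±e_k`. Conversely, at `(±eᵢ, ±eⱼ)` both `Kxᵢ` and
`⟨x₁, x₂⟩ x_{3-i}` are multiples of `xᵢ`.
-/

open Matrix

variable {ι R : Type*}

def IsSignedBasisVector [Ring R] [DecidableEq ι] (x : ι → R) : Prop :=
  ∃ (i : ι) (s : R), (s = 1 ∨ s = -1) ∧ x = s • Pi.single i 1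

section CommRing

variable [CommRing R]

theorem one_sub_vecMulVec_self_mulVec_eq_zero_iff [Fintype ι] [DecidableEq ι] {x : ι → R}
    (hx : x ⬝ᵥ x = 1) (v : ι → R) :
    (1 - vecMulVec x x) *ᵥ v = 0 ↔ ∃ r : R, v = r • x := by
  rw [sub_mulVec, one_mulVec, vecMulVec_mulVec, op_smul_eq_smul, sub_eq_zero]
  refine ⟨fun h => ⟨_, h⟩, ?_⟩
  rintro ⟨r, rfl⟩
  rw [dotProduct_smul, hx, smul_eq_mul, mul_one]

theorem neg_diagonal_mulVec_add_smul_eq_smul_iff [Fintype ι] [DecidableEq ι] (μ x y : ι → R)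
    (d r : R) :
    -(diagonal μ *ᵥ x) + d • y = r • x ↔ ∀ k, (μ k + r) * x k = d * y k := by
  simp only [funext_iff, Pi.add_apply, Pi.neg_apply, mulVec_diagonal, Pi.smul_apply, smul_eq_mul]
  exact forall_congr' fun k =>
    ⟨fun h => by linear_combination -h, fun h => by linear_combination -h⟩

theorem sub_mul_dotProduct_eq_zero [Fintype ι] {μ x y : ι → R} {d r s : R} (hx : x ⬝ᵥ x = 1)
    (hy : y ⬝ᵥ y = 1) (hr : ∀ k, (μ k + r) * x k = d * y k)
    (hs : ∀ k, (μ k + s) * y k = d * x k) :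
    (r - s) * (x ⬝ᵥ y) = 0 := by
  have hk : ∀ k, (r - s) * (x k * y k) = d * (y k * y k) - d * (x k * x k) := fun k => by
    linear_combination y k * hr k - x k * hs k
  simp only [dotProduct] at hx hy ⊢
  rw [Finset.mul_sum, Finset.sum_congr rfl fun k _ => hk k, Finset.sum_sub_distrib,
    ← Finset.mul_sum, ← Finset.mul_sum, hx, hy, sub_self]

theorem sq_add_eq_sq_of_ne_zero [IsDomain R] {μ x y : ι → R} {d r s : R}
    (hr : ∀ k, (μ k + r) * x k = d * y k) (hs : ∀ k, (μ k + s) * y k = d * x k)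
    (hdrs : d = 0 ∨ r = s) {k : ι} (hk : x k ≠ 0) :
    (μ k + r) ^ 2 = d ^ 2 := by
  refine mul_right_cancel₀ hk ?_
  rcases hdrs with rfl | rfl
  · linear_combination (μ k + r) * hr k
  · linear_combination (μ k + r) * hr k + d * hs k

theorem isSignedBasisVector_of_support_subsingleton [IsDomain R] [Fintype ι] [DecidableEq ι]
    {x : ι → R} (hx : x ⬝ᵥ x = 1) (hsupp : (Function.support x).Subsingleton) :
    IsSignedBasisVector x := by
  have hx0 : x ≠ 0 := by
    rintro rfl
    simp at hx
  obtain ⟨i, hi⟩ := Function.ne_iff.1 hx0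
  have hxi : x = x i • Pi.single i 1 := by
    ext k
    by_cases hk : k = i
    · subst hk
      simp
    · simpa [hk] using fun h => hk (hsupp h hi)
  refine ⟨i, x i, mul_self_eq_one_iff.1 ?_, hxi⟩
  rw [hxi] at hx
  simpa [mul_comm] using hx

theorem exists_neg_diagonal_mulVec_add_smul_eq_smul [Fintype ι] [DecidableEq ι] (μ : ι → R)
    (a : R) {x y : ι → R} {i j : ι} {s t : R} (hx : x = s • Pi.single i 1)
    (hy : y = t • Pi.single j 1) :
    ∃ r : R, -(diagonal μ *ᵥ x) + (a * (x ⬝ᵥ y)) • y = r • x := by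
  obtain ⟨c, hc⟩ : ∃ c, (x ⬝ᵥ y) • y = c • x := by
    subst hx hy
    by_cases hij : i = j
    · subst hij
      exact ⟨t * t, by simp [smul_smul, mul_comm, mul_left_comm]⟩
    · exact ⟨0, by simp [hij]⟩
  have hμ : diagonal μ *ᵥ x = μ i • x := by
    ext k
    by_cases hk : k = i
    · subst hk
      simp [hx, mulVec_diagonal]
    · simp [hx, hk, mulVec_diagonal]
  exact ⟨-μ i + a * c, by rw [hμ, mul_smul, hc, smul_smul, add_smul, neg_smul]⟩

end CommRing

section LinearOrderedField

variable [Field R] [LinearOrder R] [IsStrictOrderedRing R]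

theorem abs_dotProduct_le_one [Fintype ι] {x y : ι → R} (hx : x ⬝ᵥ x = 1) (hy : y ⬝ᵥ y = 1) :
    |x ⬝ᵥ y| ≤ 1 := by
  have h := Finset.sum_mul_sq_le_sq_mul_sq Finset.univ x y
  simp only [dotProduct, ← sq] at hx hy
  rw [hx, hy, one_mul] at h
  exact sq_le_one_iff_abs_le_one _ |>.1 h

theorem support_subsingleton_of_sq_add_eq_sq {μ x : ι → R} {r d : R}
    (hsq : ∀ k, x k ≠ 0 → (μ k + r) ^ 2 = d ^ 2)
    (hsep : ∀ k l, k ≠ l → 2 * |d| < |μ k - μ l|) :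
    (Function.support x).Subsingleton := by
  intro k hk l hl
  by_contra hkl
  have := calc |μ k - μ l| = |(μ k + r) - (μ l + r)| := by rw [add_sub_add_right_eq_sub]
    _ ≤ |μ k + r| + |μ l + r| := abs_sub _ _
    _ = 2 * |d| := by
      rw [(sq_eq_sq_iff_abs_eq_abs _ _).1 (hsq k hk), (sq_eq_sq_iff_abs_eq_abs _ _).1 (hsq l hl),
        two_mul]
  exact (hsep k l hkl).not_ge this

theorem isSignedBasisVector_of_coupled_eigenvectors [Fintype ι] [DecidableEq ι] {μ x y : ι → R}
    {A r s : R} (hsep : ∀ k l, k ≠ l → 4 * |A| < |μ k - μ l|) (hx : x ⬝ᵥ x = 1)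
    (hy : y ⬝ᵥ y = 1) (hr : ∀ k, (μ k + r) * x k = 2 * A * (x ⬝ᵥ y) * y k)
    (hs : ∀ k, (μ k + s) * y k = 2 * A * (x ⬝ᵥ y) * x k) :
    IsSignedBasisVector x ∧ IsSignedBasisVector y := by
  set d := 2 * A * (x ⬝ᵥ y) with hd
  have hdrs : d = 0 ∨ r = s := by
    rcases mul_eq_zero.1 (sub_mul_dotProduct_eq_zero hx hy hr hs) with h | h
    · exact .inr (sub_eq_zero.1 h)
    · exact .inl (by rw [hd, h, mul_zero])
  have hd_le : 2 * |d| ≤ 4 * |A| := by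
    rw [hd, abs_mul, abs_mul, abs_two]
    nlinarith [abs_dotProduct_le_one hx hy, abs_nonneg A]
  have hsep' k l (hkl : k ≠ l) := hd_le.trans_lt (hsep k l hkl)
  exact ⟨isSignedBasisVector_of_support_subsingleton hx <|
      support_subsingleton_of_sq_add_eq_sq (fun _ => sq_add_eq_sq_of_ne_zero hr hs hdrs) hsep',
    isSignedBasisVector_of_support_subsingleton hy <| support_subsingleton_of_sq_add_eq_sq
      (fun _ => sq_add_eq_sq_of_ne_zero hs hr (hdrs.imp_right Eq.symm)) hsep'⟩

end LinearOrderedField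

theorem stmt17_general (μ₁ μ₂ μ₃ : ℝ)
    (K : Matrix (Fin 3) (Fin 3) ℝ) (hK : K = Matrix.diagonal ![μ₁, μ₂, μ₃])
    (A : ℝ) (hA : 0 < A)
    (hAsmall : A < (1/4) * min (min |μ₁ - μ₂| |μ₂ - μ₃|) |μ₁ - μ₃|) :
    ∀ x₁ x₂ : Fin 3 → ℝ, x₁ ⬝ᵥ x₁ = 1 → x₂ ⬝ᵥ x₂ = 1 →
      (((1 - vecMulVec x₁ x₁) *ᵥ (-(K *ᵥ x₁) + (2 * A * (x₁ ⬝ᵥ x₂)) • x₂) = 0 ∧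
        (1 - vecMulVec x₂ x₂) *ᵥ (-(K *ᵥ x₂) + (2 * A * (x₁ ⬝ᵥ x₂)) • x₁) = 0) ↔
      (∃ i j : Fin 3, ∃ s t : ℝ, (s = 1 ∨ s = -1) ∧ (t = 1 ∨ t = -1) ∧
        x₁ = s • (Pi.single i 1 : Fin 3 → ℝ) ∧ x₂ = t • (Pi.single j 1 : Fin 3 → ℝ))) := by
  have hsep : ∀ k l, k ≠ l → 4 * |A| < |![μ₁, μ₂, μ₃] k - ![μ₁, μ₂, μ₃] l| := by
    have h₁ := min_le_left (min |μ₁ - μ₂| |μ₂ - μ₃|) |μ₁ - μ₃|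
    have h₂ := min_le_right (min |μ₁ - μ₂| |μ₂ - μ₃|) |μ₁ - μ₃|
    have h₃ := min_le_left |μ₁ - μ₂| |μ₂ - μ₃|
    have h₄ := min_le_right |μ₁ - μ₂| |μ₂ - μ₃|
    rw [abs_of_pos hA]
    intro k l hkl
    fin_cases k <;> fin_cases l <;> simp [abs_sub_comm] at hkl ⊢ <;> linarith
  intro x₁ x₂ hx₁ hx₂
  subst hK
  rw [one_sub_vecMulVec_self_mulVec_eq_zero_iff hx₁, one_sub_vecMulVec_self_mulVec_eq_zero_iff hx₂]
  constructor
  · rintro ⟨⟨r₁, hr₁⟩, ⟨r₂, hr₂⟩⟩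
    rw [neg_diagonal_mulVec_add_smul_eq_smul_iff] at hr₁ hr₂
    obtain ⟨⟨i, s, hs, rfl⟩, ⟨j, t, ht, rfl⟩⟩ :=
      isSignedBasisVector_of_coupled_eigenvectors hsep hx₁ hx₂ hr₁ hr₂
    exact ⟨i, j, s, t, hs, ht, rfl, rfl⟩
  · rintro ⟨i, j, s, t, -, -, hx₁, hx₂⟩
    refine ⟨exists_neg_diagonal_mulVec_add_smul_eq_smul _ _ hx₁ hx₂, ?_⟩
    rw [dotProduct_comm]
    exact exists_neg_diagonal_mulVec_add_smul_eq_smul _ _ hx₂ hx₁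

theorem stmt17 (μ₁ μ₂ μ₃ : ℝ) (h1 : 0 < μ₁) (h12 : μ₁ < μ₂) (h23 : μ₂ < μ₃)
    (K : Matrix (Fin 3) (Fin 3) ℝ) (hK : K = Matrix.diagonal ![μ₁, μ₂, μ₃])
    (A : ℝ) (hA : 0 < A)
    (hAsmall : A < (1/4) * min (min |μ₁ - μ₂| |μ₂ - μ₃|) |μ₁ - μ₃|) :
    ∀ x₁ x₂ : Fin 3 → ℝ, x₁ ⬝ᵥ x₁ = 1 → x₂ ⬝ᵥ x₂ = 1 →
      (((1 - vecMulVec x₁ x₁) *ᵥ (-(K *ᵥ x₁) + (2 * A * (x₁ ⬝ᵥ x₂)) • x₂) = 0 ∧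
        (1 - vecMulVec x₂ x₂) *ᵥ (-(K *ᵥ x₂) + (2 * A * (x₁ ⬝ᵥ x₂)) • x₁) = 0) ↔
      (∃ i j : Fin 3, ∃ s t : ℝ, (s = 1 ∨ s = -1) ∧ (t = 1 ∨ t = -1) ∧
        x₁ = s • (Pi.single i 1 : Fin 3 → ℝ) ∧ x₂ = t • (Pi.single j 1 : Fin 3 → ℝ))) :=
  stmt17_general μ₁ μ₂ μ₃ K hK A hA hAsmall
end
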